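/- Suppose the end-to-end performance p decomposes monotonically through the per-module performances (p_i), and the family (p_i) is inter-monotone. If for some module i and models k, k' one has p_i(f_{i→k}) > p_i(f_{i→k'}) for some allocation f, then replacing module i's model from k' to k never hurts end-to-end performance: p(f'_{i→k}) ≥ p(f'_{i→k'}) for every allocation f'. -/

import Mathlib

theorem replacement_never_hurts_end_to_end_general
    {V M : Type*} [DecidableEq V]
    (p : (V → M) → ℝ) (pm : V → (V → M) → ℝ)
    (hdecomp : ∃ h : (V → ℝ) → ℝ, Monotone h ∧ ∀ f : V → M, p f = h (fun i => pm i f))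
    (hinter : ∀ i : V, ∀ k k' : M,
      (∃ f : V → M, pm i (Function.update f i k) > pm i (Function.update f i k')) →
      ∀ j : V, ∀ f' : V → M,
        pm j (Function.update f' i k) ≥ pm j (Function.update f' i k'))
    (i : V) (k k' : M)
    (hstrict : ∃ f : V → M,
      pm i (Function.update f i k) > pm i (Function.update f i k')) :
    ∀ f' : V → M, p (Function.update f' i k) ≥ p (Function.update f' i k') := by
  obtain ⟨h, hmono, hp⟩ := hdecomp
  intro f'
  rw [hp, hp]
  exact hmono fun j => hinter i k k' hstrict j f'

/-- With a monotone decomposition and inter-monotone per-module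
performances, if replacing module `i`'s model from `k'` to `k` strictly improves
module `i`'s performance for some allocation, then the replacement never hurts
end-to-end performance for any allocation. -/
theorem replacement_never_hurts_end_to_end
    {V M : Type*} [Fintype V] [DecidableEq V] [Nonempty V] [Fintype M] [Nonempty M]
    (p : (V → M) → ℝ) (pm : V → (V → M) → ℝ)
    (hdecomp : ∃ h : (V → ℝ) → ℝ, Monotone h ∧ ∀ f : V → M, p f = h (fun i => pm i f))
    (hinter : ∀ i : V, ∀ k k' : M,
      (∃ f : V → M, pm i (Function.update f i k) > pm i (Function.update f i k')) →
      ∀ j : V, ∀ f' : V → M,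
        pm j (Function.update f' i k) ≥ pm j (Function.update f' i k'))
    (i : V) (k k' : M)
    (hstrict : ∃ f : V → M,
      pm i (Function.update f i k) > pm i (Function.update f i k')) :
    ∀ f' : V → M, p (Function.update f' i k) ≥ p (Function.update f' i k') :=
  replacement_never_hurts_end_to_end_general p pm hdecomp hinter i k k' hstrict
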